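/- Let fᵢ : R^d → R (i ∈ [N]) have L-Lipschitz gradients, and suppose client i runs K local gradient steps x_{k+1}^i = x_k^i − η∇fᵢ(x_k^i) from common initialization x₀ with η ≤ 1/(3KL). Then (η η_g /(2N)) L² ∑_{i=1}^N ∑_{k=0}^{K−1} ‖x_k^i − x₀‖² ≤ (9/4) η³ η_g L² K³ σ_g² + (η η_g K/4) ‖∇f(x₀)‖², where f = (1/N)∑ᵢ fᵢ and ‖∇fᵢ(x) − ∇f(x)‖² ≤ σ_g² for all i, x. -/

import Mathlib

/-!
Each local step moves the iterate by at most `η ‖∇fᵢ(x_k)‖`, and Lipschitz continuity together with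
the variance bound give `‖∇fᵢ(x_k)‖ ≤ L ‖x_k - x₀‖ + σ + ‖∇f(x₀)‖`. Since `ηLK ≤ 1/3`, induction
keeps the drift `‖x_k - x₀‖` below `(3/2) k η (σ + ‖∇f(x₀)‖)`. Squaring, summing over clients and
steps, and using `(a + b)² ≤ 2a² + 2b²` together with `9η²L²K² ≤ 1` on the gradient term gives
the bound.
-/

open Finset

lemma norm_le_of_norm_sub_le_mul {E F : Type*} [SeminormedAddCommGroup E] [SeminormedAddCommGroup F]
    {g : E → F} {L : ℝ} (hg : ∀ y z, ‖g y - g z‖ ≤ L * ‖y - z‖) (x₀ y : E) (v : F) :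
    ‖g y‖ ≤ L * ‖y - x₀‖ + (‖g x₀ - v‖ + ‖v‖) :=
  calc ‖g y‖ ≤ ‖g y - g x₀‖ + ‖g x₀‖ := norm_le_norm_sub_add _ _
    _ ≤ L * ‖y - x₀‖ + (‖g x₀ - v‖ + ‖v‖) :=
      add_le_add (hg y x₀) (norm_le_norm_sub_add _ _)

lemma norm_iterate_sub_start_le {E : Type*} [SeminormedAddCommGroup E] [NormedSpace ℝ E] {g : E → E} {x : ℕ → E} {x₀ : E} {η L B : ℝ} {K : ℕ}
    (hη : 0 ≤ η) (hL : 0 ≤ L) (hηLK : 3 * η * K * L ≤ 1)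
    (hg : ∀ y, ‖g y‖ ≤ L * ‖y - x₀‖ + B)
    (h0 : x 0 = x₀) (hstep : ∀ k < K, x (k + 1) = x k - η • g (x k)) :
    ∀ k ≤ K, ‖x k - x₀‖ ≤ 3 / 2 * k * η * B := by
  have hB : 0 ≤ B := by simpa using (norm_nonneg (g x₀)).trans (hg x₀)
  intro k
  induction k with
  | zero => simp [h0]
  | succ k ih =>
    intro hk
    have hkK : (k : ℝ) + 1 ≤ K := by exact_mod_cast hk
    have hdrift := ih (by omega)
    have hmove : ‖x (k + 1) - x₀‖ ≤ ‖x k - x₀‖ + η * ‖g (x k)‖ := by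
      rw [hstep k hk, sub_right_comm]
      exact (norm_sub_le _ _).trans_eq (by rw [norm_smul, Real.norm_of_nonneg hη])
    -- this is where `3ηKL ≤ 1` enters: the Lipschitz part of the step costs at most `ηB / 2`
    have hgrowth : η * L * ‖x k - x₀‖ ≤ η * B / 2 := by
      have hηL : 0 ≤ η * L := mul_nonneg hη hL
      have hηB : 0 ≤ η * B := mul_nonneg hη hB
      calc η * L * ‖x k - x₀‖ ≤ η * L * (3 / 2 * k * η * B) := by gcongr
        _ = 3 / 2 * (η * L * k) * (η * B) := by ring
        _ ≤ 3 / 2 * (1 / 3) * (η * B) := by gcongr; nlinarith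
        _ = η * B / 2 := by ring
    have hgrad := mul_le_mul_of_nonneg_left (hg (x k)) hη
    push_cast
    nlinarith

lemma drift_coefficient_le {η ηg L K σ G : ℝ} (hη : 0 ≤ η) (hηg : 0 ≤ ηg) (hL : 0 ≤ L)
    (hK : 0 ≤ K) (hηKL : 3 * η * K * L ≤ 1) :
    9 / 8 * η ^ 3 * ηg * L ^ 2 * K ^ 3 * (σ + G) ^ 2
      ≤ 9 / 4 * η ^ 3 * ηg * L ^ 2 * K ^ 3 * σ ^ 2 + η * ηg * K / 4 * G ^ 2 := by
  have hsq : (3 * η * K * L) ^ 2 ≤ 1 := pow_le_one₀ (by positivity) hηKL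
  calc 9 / 8 * η ^ 3 * ηg * L ^ 2 * K ^ 3 * (σ + G) ^ 2
      ≤ 9 / 8 * η ^ 3 * ηg * L ^ 2 * K ^ 3 * (2 * (σ ^ 2 + G ^ 2)) := by gcongr; exact add_sq_le
    _ = 9 / 4 * η ^ 3 * ηg * L ^ 2 * K ^ 3 * σ ^ 2
          + η * ηg * K / 4 * G ^ 2 * (3 * η * K * L) ^ 2 := by ring
    _ ≤ 9 / 4 * η ^ 3 * ηg * L ^ 2 * K ^ 3 * σ ^ 2 + η * ηg * K / 4 * G ^ 2 :=
      add_le_add le_rfl (mul_le_of_le_one_right (by positivity) hsq)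

theorem local_drift_bound_general (d N K : ℕ) (hN : 0 < N)
    (L η ηg σg : ℝ) (hL : 0 < L) (hη : 0 < η) (hηg : 0 < ηg)
    (hηle : η ≤ 1 / (3 * K * L))
    (f : Fin N → EuclideanSpace ℝ (Fin d) → ℝ)
    (hlip : ∀ i x y, ‖gradient (f i) x - gradient (f i) y‖ ≤ L * ‖x - y‖)
    (F : EuclideanSpace ℝ (Fin d) → ℝ)
    (hvar : ∀ i x, ‖gradient (f i) x - gradient F x‖ ^ 2 ≤ σg ^ 2)
    (x0 : EuclideanSpace ℝ (Fin d))
    (x : Fin N → ℕ → EuclideanSpace ℝ (Fin d))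
    (hinit : ∀ i, x i 0 = x0)
    (hstep : ∀ i, ∀ k < K, x i (k + 1) = x i k - η • gradient (f i) (x i k)) :
    η * ηg / (2 * N) * L ^ 2 * ∑ i, ∑ k ∈ range K, ‖x i k - x0‖ ^ 2
      ≤ 9 / 4 * η ^ 3 * ηg * L ^ 2 * (K : ℝ) ^ 3 * σg ^ 2
        + η * ηg * K / 4 * ‖gradient F x0‖ ^ 2 := by
  set G := ‖gradient F x0‖
  set D := 3 / 2 * K * η * (|σg| + G)
  have hηKL : 3 * η * K * L ≤ 1 :=
    calc 3 * η * K * L = η * (3 * K * L) := by ring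
      _ ≤ 1 := mul_le_of_le_div₀ zero_le_one (by positivity) hηle
  have hgrad : ∀ i y, ‖gradient (f i) y‖ ≤ L * ‖y - x0‖ + (|σg| + G) := fun i y =>
    (norm_le_of_norm_sub_le_mul (hlip i) x0 y (gradient F x0)).trans <| by
      gcongr; simpa using sq_le_sq.mp (hvar i x0)
  have hdrift : ∀ i, ∀ k ∈ range K, ‖x i k - x0‖ ^ 2 ≤ D ^ 2 := fun i k hk => by
    have hkK : k ≤ K := (mem_range.mp hk).le
    have := norm_iterate_sub_start_le hη.le hL.le hηKL (hgrad i) (hinit i) (hstep i) k hkK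
    exact pow_le_pow_left₀ (norm_nonneg _) (this.trans (by simp only [D]; gcongr)) 2
  have hsum : ∑ i, ∑ k ∈ range K, ‖x i k - x0‖ ^ 2 ≤ N * (K * D ^ 2) := by
    calc ∑ i, ∑ k ∈ range K, ‖x i k - x0‖ ^ 2 ≤ ∑ _i : Fin N, K * D ^ 2 :=
          sum_le_sum fun i _ => by simpa using sum_le_card_nsmul _ _ _ (hdrift i)
      _ = N * (K * D ^ 2) := by simp
  calc η * ηg / (2 * N) * L ^ 2 * ∑ i, ∑ k ∈ range K, ‖x i k - x0‖ ^ 2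
      ≤ η * ηg / (2 * N) * L ^ 2 * (N * (K * D ^ 2)) := by gcongr
    _ = 9 / 8 * η ^ 3 * ηg * L ^ 2 * K ^ 3 * (|σg| + G) ^ 2 := by
      field_simp [D]; ring
    _ ≤ 9 / 4 * η ^ 3 * ηg * L ^ 2 * (K : ℝ) ^ 3 * σg ^ 2 + η * ηg * K / 4 * G ^ 2 := by
      simpa using drift_coefficient_le hη.le hηg.le hL.le (Nat.cast_nonneg K) hηKL
        (σ := |σg|) (G := G)

/-- Bound on the accumulated local drift of client iterates under the
bounded global variance assumption. -/
theorem local_drift_bound (d N K : ℕ) (hN : 0 < N) (hK : 0 < K)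
    (L η ηg σg : ℝ) (hL : 0 < L) (hη : 0 < η) (hηg : 0 < ηg)
    (hηle : η ≤ 1 / (3 * K * L))
    (f : Fin N → EuclideanSpace ℝ (Fin d) → ℝ)
    (hdiff : ∀ i, Differentiable ℝ (f i))
    (hlip : ∀ i x y, ‖gradient (f i) x - gradient (f i) y‖ ≤ L * ‖x - y‖)
    (F : EuclideanSpace ℝ (Fin d) → ℝ)
    (hF : F = fun x => (N : ℝ)⁻¹ * ∑ i, f i x)
    (hvar : ∀ i x, ‖gradient (f i) x - gradient F x‖ ^ 2 ≤ σg ^ 2)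
    (x0 : EuclideanSpace ℝ (Fin d))
    (x : Fin N → ℕ → EuclideanSpace ℝ (Fin d))
    (hinit : ∀ i, x i 0 = x0)
    (hstep : ∀ i, ∀ k < K, x i (k + 1) = x i k - η • gradient (f i) (x i k)) :
    η * ηg / (2 * N) * L ^ 2 * ∑ i, ∑ k ∈ range K, ‖x i k - x0‖ ^ 2
      ≤ 9 / 4 * η ^ 3 * ηg * L ^ 2 * (K : ℝ) ^ 3 * σg ^ 2
        + η * ηg * K / 4 * ‖gradient F x0‖ ^ 2 :=
  local_drift_bound_general d N K hN L η ηg σg hL hη hηg hηle f hlip F hvar x0 x hinit hstep
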